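/- arXiv:2601.07350 — 6 statements merged into one kernel-verified Lean document; each statement's English description precedes it below -/
import Mathlib

section
/- Let A be a nontrivial unital C*-algebra over ℂ and let u ∈ A be a unitary element. Suppose that for every real number θ there exists a unitary element v ∈ A such that v * u * v⁻¹ = exp(iθ) • u. Then ‖u - 1‖ = 2. -/
/-!
Conjugating by unitaries is isometric, so the hypothesis makes `‖e^{iθ} u - 1‖` independent
of `θ`. The spectrum of `u` is a nonempty subset of the unit circle, so some rotation
`e^{iθ} u` has `-1` in its spectrum; then `-2 ∈ σ(e^{iθ} u - 1)` forces `‖u - 1‖ ≥ 2`,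
while `‖u - 1‖ ≤ ‖u‖ + ‖1‖ = 2`.
-/

open Complex

theorem Complex.exists_exp_mul_I_mul_eq {z w : ℂ} (hz : ‖z‖ = 1) (hw : ‖w‖ = 1) :
    ∃ θ : ℝ, exp (θ * I) * z = w := by
  obtain ⟨a, rfl⟩ := (norm_eq_one_iff z).mp hz
  obtain ⟨b, rfl⟩ := (norm_eq_one_iff w).mp hw
  refine ⟨b - a, ?_⟩
  rw [← exp_add]
  push_cast
  ring_nf

theorem spectrum.norm_sub_one_le_norm_sub_one {𝕜 A : Type*} [NormedField 𝕜] [NormedRing A]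
    [NormedAlgebra 𝕜 A] [CompleteSpace A] [NormOneClass A] {a : A} {k : 𝕜}
    (hk : k ∈ spectrum 𝕜 a) : ‖k - 1‖ ≤ ‖a - 1‖ := by
  have hk' : k - 1 ∈ spectrum 𝕜 (a - algebraMap 𝕜 A 1) := by
    rw [← spectrum.sub_singleton_eq]
    exact Set.sub_mem_sub hk rfl
  simpa using spectrum.norm_le_norm_of_mem hk'

section CStarRing

variable {A : Type*} [NormedRing A] [StarRing A] [CStarRing A]

theorem norm_unitary_conj_sub_one (v : unitary A) (a : A) :
    ‖(v : A) * a * ((v⁻¹ : unitary A) : A) - 1‖ = ‖a - 1‖ := by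
  have hv : (v : A) * ((v⁻¹ : unitary A) : A) = 1 := by
    rw [← Submonoid.coe_mul, mul_inv_cancel]
    rfl
  have hconj : (v : A) * a * ((v⁻¹ : unitary A) : A) - 1
      = (v : A) * (a - 1) * ((v⁻¹ : unitary A) : A) := by
    rw [mul_sub, sub_mul, mul_one, hv]
  rw [hconj, CStarRing.norm_mul_coe_unitary, CStarRing.norm_coe_unitary_mul]

theorem norm_sub_one_le_two_of_mem_unitary [Nontrivial A] {u : A} (hu : u ∈ unitary A) :
    ‖u - 1‖ ≤ 2 :=
  calc ‖u - 1‖ ≤ ‖u‖ + ‖(1 : A)‖ := norm_sub_le _ _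
    _ = 2 := by rw [CStarRing.norm_of_mem_unitary hu, norm_one]; norm_num

theorem exists_neg_one_mem_spectrum_exp_mul_I_smul [NormedAlgebra ℂ A] [CompleteSpace A]
    [Nontrivial A] {u : A} (hu : u ∈ unitary A) :
    ∃ θ : ℝ, (-1 : ℂ) ∈ spectrum ℂ (exp (θ * I) • u) := by
  obtain ⟨z, hz⟩ : (spectrum ℂ u).Nonempty := spectrum.nonempty u
  have hz_norm : ‖z‖ = 1 := by
    simpa using spectrum.subset_circle_of_unitary hu hz
  obtain ⟨θ, hθ⟩ := exists_exp_mul_I_mul_eq hz_norm (by simp : ‖(-1 : ℂ)‖ = 1)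
  refine ⟨θ, ?_⟩
  rw [spectrum.smul_eq_smul _ _ ⟨z, hz⟩, ← hθ, ← smul_eq_mul]
  exact Set.smul_mem_smul_set hz

end CStarRing

/-- If `u` is a unitary element of a nontrivial unital C*-algebra whose conjugacy class
contains all its scalar rotations `exp(iθ) • u`, then `‖u - 1‖ = 2`. -/
theorem weyl_norm_dist_one
    (A : Type*) [NormedRing A] [StarRing A] [CStarRing A] [NormedAlgebra ℂ A]
    [CompleteSpace A] [Nontrivial A]
    (u : A) (hu : u ∈ unitary A)
    (h : ∀ θ : ℝ, ∃ v : unitary A,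
      (v : A) * u * ((v⁻¹ : unitary A) : A) = Complex.exp (θ * Complex.I) • u) :
    ‖u - 1‖ = 2 := by
  obtain ⟨θ, hθ⟩ := exists_neg_one_mem_spectrum_exp_mul_I_smul hu
  obtain ⟨v, hv⟩ := h θ
  have hge := spectrum.norm_sub_one_le_norm_sub_one hθ
  rw [← hv, norm_unitary_conj_sub_one] at hge
  norm_num at hge
  exact le_antisymm (norm_sub_one_le_two_of_mem_unitary hu) hge
end

section
/- Let A be a nontrivial unital C*-algebra over ℂ and let u ∈ A be a unitary element. Suppose that for every real number θ there exists a unitary element v ∈ A such that v * u * v⁻¹ = exp(iθ) • u. Then the spectrum of u in ℂ is exactly the unit circle {z ∈ ℂ : |z| = 1}. -/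
open Pointwise Complex

theorem spectrum.smul_eq_of_units_conjugate_eq_smul {R A : Type*} [Field R] [Ring A]
    [Algebra R A] {a : A} {v : Aˣ} {c : R} (hc : c ≠ 0) (h : ↑v * a * ↑v⁻¹ = c • a) :
    c • spectrum R a = spectrum R a :=
  calc c • spectrum R a = spectrum R (c • a) :=
        (spectrum.unit_smul_eq_smul a (Units.mk0 c hc)).symm
    _ = spectrum R a := by rw [← h, spectrum.units_conjugate]

theorem Complex.eq_setOf_norm_eq_one_of_rotation_invariant {s : Set ℂ}
    (hs : ∀ z ∈ s, ‖z‖ = 1) (hne : s.Nonempty) (hrot : ∀ θ : ℝ, exp (θ * I) • s ⊆ s) :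
    s = {z | ‖z‖ = 1} := by
  refine Set.Subset.antisymm hs fun z hz => ?_
  obtain ⟨z₀, hz₀⟩ := hne
  have hz₀_ne : z₀ ≠ 0 := norm_ne_zero_iff.mp (by rw [hs z₀ hz₀]; exact one_ne_zero)
  obtain ⟨θ, hθ⟩ := (norm_eq_one_iff (z / z₀)).mp <| by
    rw [norm_div, hz, hs z₀ hz₀, div_one]
  have hz_rot : z = exp (θ * I) • z₀ := by rw [hθ, smul_eq_mul, div_mul_cancel₀ z hz₀_ne]
  exact hz_rot ▸ hrot θ (Set.smul_mem_smul_set hz₀)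

/-- If `u` is a unitary element of a nontrivial unital C*-algebra whose conjugacy class
contains all its scalar rotations `exp(iθ) • u`, then the spectrum of `u` is the full
unit circle. -/
theorem weyl_spectrum_unit_circle
    (A : Type*) [NormedRing A] [StarRing A] [CStarRing A] [NormedAlgebra ℂ A]
    [CompleteSpace A] [Nontrivial A]
    (u : A) (hu : u ∈ unitary A)
    (h : ∀ θ : ℝ, ∃ v : unitary A,
      (v : A) * u * ((v⁻¹ : unitary A) : A) = Complex.exp (θ * Complex.I) • u) :
    spectrum ℂ u = {z : ℂ | ‖z‖ = 1} := by
  refine eq_setOf_norm_eq_one_of_rotation_invariant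
    (fun _ hz => spectrum.norm_eq_one_of_unitary hu hz) (spectrum.nonempty u) fun θ => ?_
  obtain ⟨v, hv⟩ := h θ
  exact (spectrum.smul_eq_of_units_conjugate_eq_smul (v := Unitary.toUnits v)
    (exp_ne_zero _) hv).subset
end

section
/- Let V be a real vector space, let μ₂ : V × V → ℝ be a symmetric bilinear form with μ₂(f,f) ≥ 0 for all f ∈ V, and let σ : V × V → ℝ be an alternating bilinear form such that 4·μ₂(f,f)·μ₂(g,g) ≥ σ(f,g)² for all f, g ∈ V. Then for every n ∈ ℕ and every family f : Fin n → V, the complex n×n matrix N with entries N k l = μ₂(f k, f l) + (i/2)·σ(f k, f l) is positive semidefinite. -/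
open Complex ComplexOrder

/-!
Write `c = a + i b` with real `a, b` and put `g = ∑ a k • f k`, `h = ∑ b k • f k`. Since `μ₂` is
symmetric and `σ` alternating, the quadratic form of the matrix at `c` is the real number
`μ₂(g,g) + μ₂(h,h) - σ(g,h)`, and `σ(g,h) ≤ 2 √(μ₂(g,g) μ₂(h,h)) ≤ μ₂(g,g) + μ₂(h,h)`.
-/

open Matrix

namespace LinearMap

variable {ι R M : Type*} [Fintype ι] [CommSemiring R] [AddCommMonoid M] [Module R M]

def gram (B : M →ₗ[R] M →ₗ[R] R) (f : ι → M) : Matrix ι ι R :=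
  Matrix.of fun i j => B (f i) (f j)

theorem dotProduct_gram_mulVec (B : M →ₗ[R] M →ₗ[R] R) (f : ι → M) (a b : ι → R) :
    a ⬝ᵥ B.gram f *ᵥ b =
      B (Fintype.linearCombination R f a) (Fintype.linearCombination R f b) := by
  simp only [gram, dotProduct, mulVec, of_apply, Fintype.linearCombination_apply, map_sum,
    map_smul, sum_apply, smul_apply, smul_eq_mul, Finset.mul_sum]
  rw [Finset.sum_comm]
  exact Finset.sum_congr rfl fun i _ => Finset.sum_congr rfl fun j _ => by ring

end LinearMap

theorem Matrix.star_dotProduct_map_ofReal_mulVec {ι : Type*} [Fintype ι] (A : Matrix ι ι ℝ)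
    (x : ι → ℂ) :
    star x ⬝ᵥ A.map ofReal *ᵥ x =
      ((re ∘ x) ⬝ᵥ A *ᵥ (re ∘ x) + (im ∘ x) ⬝ᵥ A *ᵥ (im ∘ x) : ℝ) +
        I * ((re ∘ x) ⬝ᵥ A *ᵥ (im ∘ x) - (im ∘ x) ⬝ᵥ A *ᵥ (re ∘ x) : ℝ) := by
  apply Complex.ext <;>
    simp [dotProduct, mulVec, Finset.mul_sum, ← Finset.sum_add_distrib, ← Finset.sum_neg_distrib,
      sub_eq_add_neg]

theorem le_add_of_sq_le_four_mul_mul {p q s : ℝ} (hp : 0 ≤ p) (hq : 0 ≤ q)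
    (h : s ^ 2 ≤ 4 * (p * q)) : s ≤ p + q := by
  nlinarith [sq_nonneg (p - q)]

/-- If `μ₂` is a positive symmetric bilinear form and `σ` an alternating bilinear form on
a real vector space satisfying `4 μ₂(f,f) μ₂(g,g) ≥ σ(f,g)²`, then the matrix with entries
`μ₂(f k, f l) + (i/2) σ(f k, f l)` is positive semidefinite. -/
theorem gram_matrix_posSemidef
    (V : Type*) [AddCommGroup V] [Module ℝ V]
    (μ₂ : V →ₗ[ℝ] V →ₗ[ℝ] ℝ) (σ : V →ₗ[ℝ] V →ₗ[ℝ] ℝ)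
    (hsymm : ∀ f g : V, μ₂ f g = μ₂ g f)
    (hpos : ∀ f : V, 0 ≤ μ₂ f f)
    (halt : ∀ f : V, σ f f = 0)
    (hdom : ∀ f g : V, σ f g ^ 2 ≤ 4 * (μ₂ f f * μ₂ g g))
    (n : ℕ) (f : Fin n → V) :
    Matrix.PosSemidef (fun k l : Fin n =>
      ((μ₂ (f k) (f l) : ℂ) + Complex.I / 2 * (σ (f k) (f l) : ℂ))) := by
  have hanti : ∀ u v : V, -σ u v = σ v u := LinearMap.IsAlt.neg halt
  have hdecomp : (fun k l : Fin n => ((μ₂ (f k) (f l) : ℂ) + I / 2 * (σ (f k) (f l) : ℂ))) =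
      (μ₂.gram f).map ofReal + (I / 2) • (σ.gram f).map ofReal := by
    ext k l
    simp [LinearMap.gram]
  rw [hdecomp, posSemidef_iff_dotProduct_mulVec]
  refine ⟨?_, fun x => ?_⟩
  · ext k l
    simp [LinearMap.gram, hsymm (f k), ← hanti (f k)]
    ring
  · rw [add_mulVec, smul_mulVec, dotProduct_add, dotProduct_smul,
      star_dotProduct_map_ofReal_mulVec, star_dotProduct_map_ofReal_mulVec]
    simp only [LinearMap.dotProduct_gram_mulVec]
    set g := Fintype.linearCombination ℝ f (re ∘ x)
    set h := Fintype.linearCombination ℝ f (im ∘ x)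
    have hform : 0 ≤ μ₂ g g + μ₂ h h - σ g h :=
      sub_nonneg.2 (le_add_of_sq_le_four_mul_mul (hpos g) (hpos h) (hdom g h))
    rw [hsymm g h, ← hanti g h, halt g, halt h]
    convert Complex.zero_le_real.2 hform using 1
    push_cast
    linear_combination (σ g h : ℂ) * I_mul_I
end

section
/- Let V be a real vector space, let μ₂ : V × V → ℝ be a symmetric bilinear form with μ₂(f,f) ≥ 0 for all f ∈ V, and let σ : V × V → ℝ be an alternating bilinear form such that 4·μ₂(f,f)·μ₂(g,g) ≥ σ(f,g)² for all f, g ∈ V. Then for every n ∈ ℕ and every family f : Fin n → V, the complex n×n matrix M with entries M k l = exp(μ₂(f k, f l) + (i/2)·σ(f k, f l)) is positive semidefinite. -/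
open Complex ComplexOrder

/-!
Write `x = a + i b` and `u = ∑ aₖ fₖ`, `v = ∑ bₖ fₖ`. The quadratic form of the matrix
`μ₂(fₖ, fₗ) + (i/2) σ(fₖ, fₗ)` at `x` is `μ₂(u,u) + μ₂(v,v) - σ(u,v)`, which is nonnegative
since `|σ(u,v)| ≤ 2 √(μ₂(u,u) μ₂(v,v)) ≤ μ₂(u,u) + μ₂(v,v)`. The entrywise exponential of a positive
semidefinite matrix is the sum of the series `∑ A^{⊙m} / m!` of Hadamard powers, each positive
semidefinite by the Schur product theorem, and the positive semidefinite cone is closed.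
-/

namespace Matrix

variable {ι 𝕜 : Type*} [RCLike 𝕜]

lemma isClosed_setOf_posSemidef : IsClosed {A : Matrix ι ι 𝕜 | A.PosSemidef} := by
  have hHerm : IsClosed {A : Matrix ι ι 𝕜 | A.IsHermitian} :=
    isClosed_eq continuous_id.matrix_conjTranspose continuous_id
  simp only [PosSemidef, Set.ofPred_and, Set.ofPred_forall]
  refine hHerm.inter (isClosed_iInter fun x => isClosed_le continuous_const ?_)
  exact continuous_finsetSum _ fun i _ => continuous_finsetSum _ fun j _ => by fun_prop

lemma PosSemidef.of_hasSum {κ : Type*} {A : κ → Matrix ι ι 𝕜} {S : Matrix ι ι 𝕜}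
    (hS : HasSum A S) (hA : ∀ k, (A k).PosSemidef) : S.PosSemidef :=
  isClosed_setOf_posSemidef.mem_of_tendsto hS
    (Filter.Eventually.of_forall fun s => posSemidef_sum s fun k _ => hA k)

lemma PosSemidef.map_pow [Finite ι] {A : Matrix ι ι 𝕜} (hA : A.PosSemidef) (m : ℕ) :
    (A.map (· ^ m)).PosSemidef := by
  induction m with
  | zero =>
    convert posSemidef_vecMulVec_self_star (1 : ι → 𝕜) using 1
    ext i j
    simp [vecMulVec_apply]
  | succ m ih =>
    convert ih.hadamard hA using 1
    ext i j
    simp [pow_succ]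

lemma PosSemidef.map_exp [Finite ι] {A : Matrix ι ι 𝕜} (hA : A.PosSemidef) :
    (A.map NormedSpace.exp).PosSemidef := by
  have hsum :
      HasSum (fun m : ℕ => (m.factorial⁻¹ : ℝ) • A.map (· ^ m)) (A.map NormedSpace.exp) :=
    Pi.hasSum.2 fun i => Pi.hasSum.2 fun j => NormedSpace.exp_series_hasSum_exp' (A i j)
  exact PosSemidef.of_hasSum hsum fun m => (hA.map_pow m).smul (by positivity)

end Matrix

lemma LinearMap.apply_sum_smul_sum_smul {R M ι : Type*} [CommSemiring R] [AddCommMonoid M]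
    [Module R M] [Fintype ι] (B : M →ₗ[R] M →ₗ[R] R) (a b : ι → R) (f : ι → M) :
    B (∑ k, a k • f k) (∑ l, b l • f l) = ∑ k, ∑ l, a k * b l * B (f k) (f l) := by
  simp only [map_sum, map_smul, LinearMap.sum_apply, LinearMap.smul_apply, smul_eq_mul,
    Finset.mul_sum]
  rw [Finset.sum_comm]
  exact Finset.sum_congr rfl fun k _ => Finset.sum_congr rfl fun l _ => by ring

open Matrix

section WeylGram

variable {V ι : Type*} [AddCommGroup V] [Module ℝ V]
  (μ σ : V →ₗ[ℝ] V →ₗ[ℝ] ℝ) (f : ι → V)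

noncomputable def weylGram : Matrix ι ι ℂ :=
  of fun k l => (μ (f k) (f l) : ℂ) + I / 2 * σ (f k) (f l)

lemma isHermitian_weylGram (hμ : ∀ x y, μ x y = μ y x) (hσ : σ.IsAlt) :
    (weylGram μ σ f).IsHermitian := by
  ext k l
  simp only [weylGram, conjTranspose_apply, of_apply, hμ (f l) (f k), ← hσ.neg (f k) (f l),
    star_add, star_mul', star_div₀, RCLike.star_def, conj_ofReal, conj_I, star_ofNat,
    ofReal_neg, map_neg]
  ring

lemma re_star_dotProduct_weylGram_mulVec [Fintype ι] (hσ : σ.IsAlt) (x : ι → ℂ) :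
    (star x ⬝ᵥ weylGram μ σ f *ᵥ x).re =
      μ (∑ k, (x k).re • f k) (∑ k, (x k).re • f k)
        + μ (∑ k, (x k).im • f k) (∑ k, (x k).im • f k)
        - σ (∑ k, (x k).re • f k) (∑ k, (x k).im • f k) := by
  have hterm : ∀ k l, (star (x k) * (weylGram μ σ f k l * x l)).re =
      (x k).re * (x l).re * μ (f k) (f l) + (x k).im * (x l).im * μ (f k) (f l)
        - ((x k).re * (x l).im * σ (f k) (f l) - (x k).im * (x l).re * σ (f k) (f l)) / 2 := by
    intro k l
    simp only [weylGram, of_apply, RCLike.star_def, mul_re, mul_im, add_re, add_im, conj_re,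
      conj_im, ofReal_re, ofReal_im, div_ofNat_re, div_ofNat_im, I_re, I_im]
    ring
  simp only [dotProduct, mulVec, Finset.mul_sum, Pi.star_apply, Complex.re_sum, hterm,
    Finset.sum_add_distrib, Finset.sum_sub_distrib, ← Finset.sum_div,
    ← LinearMap.apply_sum_smul_sum_smul]
  rw [← hσ.neg]
  ring

lemma posSemidef_weylGram [Fintype ι] (hμ : ∀ x y, μ x y = μ y x)
    (hμ_nonneg : ∀ x, 0 ≤ μ x x) (hσ : σ.IsAlt) (hσμ : ∀ x y, σ x y ^ 2 ≤ 4 * (μ x x * μ y y)) :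
    (weylGram μ σ f).PosSemidef := by
  have hH := isHermitian_weylGram μ σ f hμ hσ
  refine posSemidef_iff_dotProduct_mulVec.2 ⟨hH, fun x => Complex.nonneg_iff.2
    ⟨?_, (hH.im_star_dotProduct_mulVec_self x).symm⟩⟩
  rw [re_star_dotProduct_weylGram_mulVec μ σ f hσ]
  set u := ∑ k, (x k).re • f k
  set v := ∑ k, (x k).im • f k
  nlinarith [hσμ u v, hμ_nonneg u, hμ_nonneg v, sq_nonneg (μ u u - μ v v)]

end WeylGram

/-- If `μ₂` is a positive symmetric bilinear form and `σ` an alternating bilinear form on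
a real vector space satisfying `4 μ₂(f,f) μ₂(g,g) ≥ σ(f,g)²`, then the matrix with entries
`exp(μ₂(f k, f l) + (i/2) σ(f k, f l))` is positive semidefinite. -/
theorem exp_gram_matrix_posSemidef
    (V : Type*) [AddCommGroup V] [Module ℝ V]
    (μ₂ : V →ₗ[ℝ] V →ₗ[ℝ] ℝ) (σ : V →ₗ[ℝ] V →ₗ[ℝ] ℝ)
    (hsymm : ∀ f g : V, μ₂ f g = μ₂ g f)
    (hpos : ∀ f : V, 0 ≤ μ₂ f f)
    (halt : ∀ f : V, σ f f = 0)
    (hdom : ∀ f g : V, σ f g ^ 2 ≤ 4 * (μ₂ f f * μ₂ g g))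
    (n : ℕ) (f : Fin n → V) :
    Matrix.PosSemidef (fun k l : Fin n =>
      Complex.exp ((μ₂ (f k) (f l) : ℂ) + Complex.I / 2 * (σ (f k) (f l) : ℂ))) := by
  rw [Complex.exp_eq_exp_ℂ]
  exact (posSemidef_weylGram μ₂ σ f hsymm hpos halt hdom).map_exp
end

section
/- It holds that (1/(2√π)) · ∫_{−∞}^{∞} exp(−u²/4) · (2 + u²) · log(u²) du = 4·(1 − γ), where γ is the Euler–Mascheroni constant. -/
/-!
With `w u = exp (-u ^ 2 / 4) * (2 + u ^ 2)`, the integral equals `4 ∫₀^∞ w(u) log u du`, which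
is four times the derivative at `s = 1` of the Mellin transform `∫₀^∞ u ^ (s - 1) w(u) du`.
The Gaussian moments give that transform in closed form as `2 ^ s (1 + s) Γ(s / 2)`, and its
derivative at `1` is `2 √π (1 - γ)` by `Γ(1/2) = √π` and `Γ'(1/2) = -√π (γ + 2 log 2)`.
-/

open Real MeasureTheory Set Filter Asymptotics Topology

theorem hasDerivAt_integral_rpow_mul_of_isBigO_rpow {f : ℝ → ℝ} {a b s : ℝ}
    (hfc : LocallyIntegrableOn f (Ioi 0)) (hf_top : f =O[atTop] (· ^ (-a))) (hs_top : s < a)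
    (hf_bot : f =O[𝓝[>] 0] (· ^ (-b))) (hs_bot : b < s) :
    HasDerivAt (fun σ ↦ ∫ x in Ioi 0, x ^ (σ - 1) * f x)
      (∫ x in Ioi 0, x ^ (s - 1) * (log x * f x)) s := by
  have ofReal_isBigO {l : Filter ℝ} {g : ℝ → ℝ} (h : f =O[l] g) :
      (fun x ↦ (f x : ℂ)) =O[l] g :=
    isBigO_norm_left.mp (by simpa only [Complex.norm_real] using h.norm_left)
  have mellin_ofReal (g : ℝ → ℝ) (σ : ℝ) :
      mellin (fun x ↦ (g x : ℂ)) σ = ((∫ x in Ioi 0, x ^ (σ - 1) * g x : ℝ) : ℂ) := by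
    rw [mellin, ← integral_complex_ofReal]
    refine setIntegral_congr_fun measurableSet_Ioi fun x hx ↦ ?_
    rw [smul_eq_mul, Complex.ofReal_mul, Complex.ofReal_cpow (le_of_lt hx)]
    push_cast
    ring
  have hmellin := (mellin_hasDerivAt_of_isBigO_rpow (f := fun x ↦ (f x : ℂ))
    (Complex.ofRealCLM.locallyIntegrableOn_comp hfc) (ofReal_isBigO hf_top)
    (by simpa using hs_top) (ofReal_isBigO hf_bot) (by simpa using hs_bot)).2.real_of_complex
  have hlog : (fun x ↦ log x • (f x : ℂ)) = fun x ↦ ((log x * f x : ℝ) : ℂ) := by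
    ext x; push_cast; rw [Complex.real_smul]
  simpa only [hlog, mellin_ofReal, Complex.ofReal_re] using hmellin

theorem integral_rpow_mul_exp_neg_sq_div_four {q : ℝ} (hq : -1 < q) :
    ∫ x in Ioi 0, x ^ q * exp (-x ^ 2 / 4) = 2 ^ q * Gamma ((q + 1) / 2) := by
  have h := integral_rpow_mul_exp_neg_mul_rpow two_pos hq (by norm_num : (0 : ℝ) < 1 / 4)
  have hscale : (1 / 4 : ℝ) ^ (-(q + 1) / 2) * (1 / 2) = 2 ^ q := by
    rw [show (1 / 4 : ℝ) = 2 ^ (-2 : ℝ) by norm_num, ← rpow_mul two_pos.le,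
      show -2 * (-(q + 1) / 2) = q + 1 by ring, rpow_add_one two_ne_zero]
    ring
  rw [← hscale, ← h]
  refine setIntegral_congr_fun measurableSet_Ioi fun x _ ↦ ?_
  rw [rpow_two]
  ring_nf

noncomputable def gaussWeight (u : ℝ) : ℝ := exp (-u ^ 2 / 4) * (2 + u ^ 2)

theorem continuous_gaussWeight : Continuous gaussWeight := by
  unfold gaussWeight
  fun_prop

theorem gaussWeight_isLittleO_rpow_atTop (a : ℝ) : gaussWeight =o[atTop] (· ^ a) := by
  have hb : (0 : ℝ) < 1 / 4 := by norm_num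
  refine ((((rpow_mul_exp_neg_mul_sq_isLittleO_exp_neg hb 0).const_mul_left 2).add
    (rpow_mul_exp_neg_mul_sq_isLittleO_exp_neg hb 2)).trans
    (isLittleO_exp_neg_mul_rpow_atTop (by norm_num) a)).congr_left fun x ↦ ?_
  rw [gaussWeight, rpow_zero, rpow_two]
  ring_nf

theorem integral_rpow_mul_gaussWeight {s : ℝ} (hs : 0 < s) :
    ∫ x in Ioi 0, x ^ (s - 1) * gaussWeight x = 2 ^ s * (1 + s) * Gamma (s / 2) := by
  have hlow : -1 < s - 1 := by linarith
  have hhigh : -1 < s + 1 := by linarith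
  have hint (q : ℝ) (hq : -1 < q) : IntegrableOn (fun x ↦ x ^ q * exp (-x ^ 2 / 4)) (Ioi 0) :=
    (integrableOn_rpow_mul_exp_neg_mul_sq (b := 1 / 4) (by norm_num) hq).congr_fun
      (fun x _ ↦ by ring_nf) measurableSet_Ioi
  calc ∫ x in Ioi 0, x ^ (s - 1) * gaussWeight x
      = ∫ x in Ioi 0, 2 * (x ^ (s - 1) * exp (-x ^ 2 / 4)) + x ^ (s + 1) * exp (-x ^ 2 / 4) := by
        refine setIntegral_congr_fun measurableSet_Ioi fun x hx ↦ ?_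
        rw [gaussWeight, show s + 1 = (s - 1) + 2 by ring, rpow_add hx, rpow_two]
        ring
    _ = 2 * (2 ^ (s - 1) * Gamma (s / 2)) + 2 ^ (s + 1) * Gamma (s / 2 + 1) := by
        rw [integral_add ((hint _ hlow).const_mul 2) (hint _ hhigh), integral_const_mul,
          integral_rpow_mul_exp_neg_sq_div_four hlow, integral_rpow_mul_exp_neg_sq_div_four hhigh]
        ring_nf
    _ = 2 ^ s * (1 + s) * Gamma (s / 2) := by
        rw [Gamma_add_one (by positivity), rpow_sub_one two_ne_zero, rpow_add_one two_ne_zero]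
        ring

theorem hasDerivAt_two_rpow_mul_Gamma_half :
    HasDerivAt (fun s ↦ 2 ^ s * (1 + s) * Gamma (s / 2))
      (2 * √π * (1 - eulerMascheroniConstant)) 1 := by
  have hΓ : HasDerivAt (fun s ↦ Gamma (s / 2))
      (-√π * (eulerMascheroniConstant + 2 * log 2) * (1 / 2)) 1 :=
    hasDerivAt_Gamma_one_half.comp (h := fun s : ℝ ↦ s / 2) 1 ((hasDerivAt_id' 1).div_const 2)
  refine (((hasStrictDerivAt_const_rpow two_pos 1).hasDerivAt.mul
    ((hasDerivAt_id' (1 : ℝ)).const_add 1)).mul hΓ).congr_deriv ?_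
  rw [Pi.mul_apply, Gamma_one_half_eq, rpow_one]
  ring

theorem integral_log_mul_gaussWeight :
    ∫ x in Ioi 0, log x * gaussWeight x = 2 * √π * (1 - eulerMascheroniConstant) := by
  have hbot : gaussWeight =O[𝓝[>] 0] (· ^ (-0 : ℝ)) := by
    simpa only [neg_zero, rpow_zero] using
      (continuous_gaussWeight.tendsto 0).mono_left nhdsWithin_le_nhds |>.isBigO_one ℝ
  have hmellin := hasDerivAt_integral_rpow_mul_of_isBigO_rpow
    (continuous_gaussWeight.locallyIntegrable.locallyIntegrableOn _)
    (gaussWeight_isLittleO_rpow_atTop (-2)).isBigO (by norm_num : (1 : ℝ) < 2) hbot one_pos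
  have hclosed : (fun s ↦ ∫ x in Ioi 0, x ^ (s - 1) * gaussWeight x)
      =ᶠ[𝓝 1] fun s ↦ 2 ^ s * (1 + s) * Gamma (s / 2) := by
    filter_upwards [eventually_gt_nhds one_pos] with s hs
    exact integral_rpow_mul_gaussWeight hs
  simpa only [sub_self, rpow_zero, one_mul] using
    hmellin.unique (hasDerivAt_two_rpow_mul_Gamma_half.congr_of_eventuallyEq hclosed)

/-- The one-dimensional Gaussian–logarithm integral evaluating to `4(1 − γ)`. -/
theorem gaussian_log_integral_one_dim :
    (1 / (2 * Real.sqrt π)) *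
      ∫ u : ℝ, Real.exp (-u ^ 2 / 4) * (2 + u ^ 2) * Real.log (u ^ 2) =
    4 * (1 - Real.eulerMascheroniConstant) := by
  have heven (u : ℝ) : exp (-u ^ 2 / 4) * (2 + u ^ 2) * log (u ^ 2)
      = 2 * (log |u| * gaussWeight |u|) := by
    rw [← sq_abs u, log_pow, gaussWeight]
    ring
  have hπ : √π ≠ 0 := (sqrt_pos.mpr pi_pos).ne'
  simp_rw [heven]
  rw [integral_const_mul, integral_comp_abs (f := fun x ↦ log x * gaussWeight x),
    integral_log_mul_gaussWeight]
  field_simp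
  ring
end

section
/- Let Q denote the Minkowski quadratic form on ℝ⁴: Q(x) = −x₀² + x₁² + x₂² + x₃², and for integrable functions f, g : ℝ⁴ → ℝ define C(f,g) = ∫∫_{ℝ⁴×ℝ⁴} f(x) · g(y) · sgn(x₀ − y₀) · 1_{Q(x−y) < 0} dx dy. Let p, q ∈ ℝ⁴ with Q(p − q) > 0. Then there exists ε > 0 such that for all integrable f, g : ℝ⁴ → ℝ with the support of f contained in the closed Euclidean ball of radius ε around p and the support of g contained in the closed Euclidean ball of radius ε around q, one has C(f,g) = 0. -/
open Real MeasureTheory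

/-- The Minkowski quadratic form on `ℝ⁴`. -/
noncomputable def minkQ (x : EuclideanSpace ℝ (Fin 4)) : ℝ :=
  -(x 0) ^ 2 + (x 1) ^ 2 + (x 2) ^ 2 + (x 3) ^ 2

/-- The causal functional `C(f,g)`. -/
noncomputable def causalC (f g : EuclideanSpace ℝ (Fin 4) → ℝ) : ℝ :=
  ∫ x : EuclideanSpace ℝ (Fin 4), ∫ y : EuclideanSpace ℝ (Fin 4),
    f x * g y * Real.sign (x 0 - y 0) * (if minkQ (x - y) < 0 then (1 : ℝ) else 0)

lemma minkQ_continuous : Continuous minkQ := by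
  unfold minkQ
  fun_prop

/-- Strict localization, spacelike case: if `p` and `q` are spacelike separated, then for
sharply enough localized test functions the causal functional vanishes. -/
theorem causalC_eq_zero_of_spacelike
    (p q : EuclideanSpace ℝ (Fin 4)) (hpq : 0 < minkQ (p - q)) :
    ∃ ε > (0 : ℝ), ∀ f g : EuclideanSpace ℝ (Fin 4) → ℝ,
      Integrable f → Integrable g →
      Function.support f ⊆ Metric.closedBall p ε →
      Function.support g ⊆ Metric.closedBall q ε →
      causalC f g = 0 := by
  have hF : Continuous (fun z : EuclideanSpace ℝ (Fin 4) × EuclideanSpace ℝ (Fin 4) =>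
      minkQ (z.1 - z.2)) := minkQ_continuous.comp (continuous_fst.sub continuous_snd)
  have hmem : {z : EuclideanSpace ℝ (Fin 4) × EuclideanSpace ℝ (Fin 4) |
      0 < minkQ (z.1 - z.2)} ∈ nhds (p, q) := by
    have := hF.continuousAt (x := (p, q)) |>.preimage_mem_nhds (isOpen_Ioi.mem_nhds hpq)
    simpa [Set.preimage, Set.mem_Ioi] using this
  obtain ⟨δ, hδ, hball⟩ := Metric.mem_nhds_iff.mp hmem
  refine ⟨δ / 2, by linarith, fun f g hf hg hsf hsg => ?_⟩
  have key : ∀ x y : EuclideanSpace ℝ (Fin 4),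
      f x * g y * Real.sign (x 0 - y 0) * (if minkQ (x - y) < 0 then (1 : ℝ) else 0) = 0 := by
    intro x y
    by_cases hfx : f x = 0
    · simp [hfx]
    by_cases hgy : g y = 0
    · simp [hgy]
    have hx : x ∈ Metric.closedBall p (δ / 2) := hsf hfx
    have hy : y ∈ Metric.closedBall q (δ / 2) := hsg hgy
    have hdist : dist (x, y) (p, q) < δ := by
      rw [Prod.dist_eq]
      exact lt_of_le_of_lt (max_le (Metric.mem_closedBall.mp hx) (Metric.mem_closedBall.mp hy))
        (by linarith)
    have hpos : 0 < minkQ (x - y) := hball hdist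
    rw [if_neg (not_lt.mpr hpos.le), mul_zero]
  simp only [causalC, key, integral_zero]
end
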